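/- If a mixed strategy σ* attains the maximin value, i.e., σ* maximizes σ ↦ min over j in κ of ∑ i, σ i * U i j over the simplex on ι, and a mixed strategy τ* attains the minimax value, i.e., τ* minimizes τ ↦ max over i in ι of ∑ j, τ j * U i j over the simplex on κ, then (σ*, τ*) is a mixed Nash equilibrium and U(σ*, τ*) equals the game value v = max_σ min_τ U(σ, τ). -/

import Mathlib

/-!
Von Neumann's minimax theorem (Sion's theorem applied to the bilinear payoff on the two
simplices) gives mixed strategies `τ₀`, `σ₀` with `max_i (U τ₀)_i ≤ min_j (σ₀ U)_j`.
Optimality of `σ*` and `τ*` then yields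
`max_i (U τ*)_i ≤ max_i (U τ₀)_i ≤ min_j (σ₀ U)_j ≤ min_j (σ* U)_j`, and since the payoff of a
mixed strategy lies between the extreme pure-strategy payoffs, every deviation from `(σ*, τ*)`
is squeezed by this chain.
-/

open Finset

/-- Expected payoff of the matrix game `U` under mixed strategies `σ` and `τ`. -/
def pay {ι κ : Type*} [Fintype ι] [Fintype κ] (U : ι → κ → ℝ) (σ : ι → ℝ) (τ : κ → ℝ) : ℝ :=
  ∑ i, ∑ j, σ i * τ j * U i j

/-- `(σ, τ)` is a mixed Nash equilibrium of the zero-sum matrix game `U`. -/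
def isNE {ι κ : Type*} [Fintype ι] [Fintype κ] (U : ι → κ → ℝ) (σ : ι → ℝ) (τ : κ → ℝ) : Prop :=
  σ ∈ stdSimplex ℝ ι ∧ τ ∈ stdSimplex ℝ κ ∧
    (∀ σ' ∈ stdSimplex ℝ ι, pay U σ' τ ≤ pay U σ τ) ∧
    (∀ τ' ∈ stdSimplex ℝ κ, pay U σ τ ≤ pay U σ τ')

theorem LinearMap.exists_isSaddlePointOn {E F : Type*}
    [AddCommGroup E] [Module ℝ E] [TopologicalSpace E] [IsTopologicalAddGroup E]
    [ContinuousSMul ℝ E] [T2Space E] [FiniteDimensional ℝ E]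
    [AddCommGroup F] [Module ℝ F] [TopologicalSpace F] [IsTopologicalAddGroup F]
    [ContinuousSMul ℝ F] [T2Space F] [FiniteDimensional ℝ F]
    (B : F →ₗ[ℝ] E →ₗ[ℝ] ℝ) {X : Set E} {Y : Set F}
    (hX : X.Nonempty) (cX : Convex ℝ X) (kX : IsCompact X)
    (hY : Y.Nonempty) (cY : Convex ℝ Y) (kY : IsCompact Y) :
    ∃ a ∈ X, ∃ b ∈ Y, IsSaddlePointOn X Y (fun x y => B y x) a b :=
  Sion.exists_isSaddlePointOn hX cX kX
    (fun y _ => (B y).continuous_of_finiteDimensional.lowerSemicontinuous.lowerSemicontinuousOn _)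
    (fun y _ => ((B y).convexOn cX).quasiconvexOn) cY hY kY
    (fun x _ =>
      (B.flip x).continuous_of_finiteDimensional.upperSemicontinuous.upperSemicontinuousOn _)
    (fun x _ => ((B.flip x).concaveOn cY).quasiconcaveOn)

section

variable {ι κ : Type*} [Fintype ι] [Fintype κ] (U : ι → κ → ℝ)

theorem pay_eq_toLinearMap₂' [DecidableEq ι] [DecidableEq κ] (σ : ι → ℝ) (τ : κ → ℝ) :
    pay U σ τ = Matrix.toLinearMap₂' ℝ (Matrix.of U) σ τ := by
  rw [Matrix.toLinearMap₂'_apply, pay]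
  simp only [Matrix.of_apply, smul_eq_mul]
  congr! 2 with i _ j _
  ring

theorem pay_eq_sum_mul_sum_left (σ : ι → ℝ) (τ : κ → ℝ) :
    pay U σ τ = ∑ i, σ i * ∑ j, τ j * U i j := by
  simp only [pay, mul_sum, mul_assoc]

theorem pay_eq_sum_mul_sum_right (σ : ι → ℝ) (τ : κ → ℝ) :
    pay U σ τ = ∑ j, τ j * ∑ i, σ i * U i j := by
  rw [pay, sum_comm]
  simp only [mul_sum]
  congr! 2 with j _ i _
  ring

theorem continuous_pay (σ : ι → ℝ) : Continuous (pay U σ) := by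
  unfold pay; fun_prop

theorem pay_single_left [DecidableEq ι] (i : ι) (τ : κ → ℝ) :
    pay U (Pi.single i 1) τ = ∑ j, τ j * U i j := by
  simp [pay_eq_sum_mul_sum_left, Pi.single_apply]

theorem pay_single_right [DecidableEq κ] (σ : ι → ℝ) (j : κ) :
    pay U σ (Pi.single j 1) = ∑ i, σ i * U i j := by
  simp [pay_eq_sum_mul_sum_right, Pi.single_apply]

theorem inf'_le_pay [Nonempty κ] (σ : ι → ℝ) {τ : κ → ℝ} (hτ : τ ∈ stdSimplex ℝ κ) :
    univ.inf' univ_nonempty (fun j => ∑ i, σ i * U i j) ≤ pay U σ τ := by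
  set m := univ.inf' univ_nonempty (fun j => ∑ i, σ i * U i j)
  calc m = ∑ j, τ j * m := by rw [← sum_mul, hτ.2, one_mul]
    _ ≤ pay U σ τ := by
      rw [pay_eq_sum_mul_sum_right]
      gcongr with j
      · exact hτ.1 j
      · exact inf'_le _ (mem_univ j)

theorem pay_le_sup' [Nonempty ι] {σ : ι → ℝ} (hσ : σ ∈ stdSimplex ℝ ι) (τ : κ → ℝ) :
    pay U σ τ ≤ univ.sup' univ_nonempty (fun i => ∑ j, τ j * U i j) := by
  set M := univ.sup' univ_nonempty (fun i => ∑ j, τ j * U i j)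
  calc pay U σ τ ≤ ∑ i, σ i * M := by
        rw [pay_eq_sum_mul_sum_left]
        gcongr with i
        · exact hσ.1 i
        · exact le_sup' (fun i => ∑ j, τ j * U i j) (mem_univ i)
    _ = M := by rw [← sum_mul, hσ.2, one_mul]

theorem exists_minimax_le_maximin [Nonempty ι] [Nonempty κ] :
    ∃ τ₀ ∈ stdSimplex ℝ κ, ∃ σ₀ ∈ stdSimplex ℝ ι,
      univ.sup' univ_nonempty (fun i => ∑ j, τ₀ j * U i j) ≤
        univ.inf' univ_nonempty (fun j => ∑ i, σ₀ i * U i j) := by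
  classical
  obtain ⟨τ₀, hτ₀, σ₀, hσ₀, hsaddle⟩ :=
    LinearMap.exists_isSaddlePointOn (Matrix.toLinearMap₂' ℝ (Matrix.of U))
      ⟨_, single_mem_stdSimplex ℝ (Classical.arbitrary κ)⟩ (convex_stdSimplex ℝ κ)
      (isCompact_stdSimplex ℝ κ)
      ⟨_, single_mem_stdSimplex ℝ (Classical.arbitrary ι)⟩ (convex_stdSimplex ℝ ι)
      (isCompact_stdSimplex ℝ ι)
  refine ⟨τ₀, hτ₀, σ₀, hσ₀, sup'_le _ _ fun i _ => le_inf' _ _ fun j _ => ?_⟩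
  simpa only [← pay_eq_toLinearMap₂', pay_single_left, pay_single_right] using
    hsaddle _ (single_mem_stdSimplex ℝ j) _ (single_mem_stdSimplex ℝ i)

variable {U}

theorem isNE_of_sup'_le_inf' [Nonempty ι] [Nonempty κ] {σ : ι → ℝ} {τ : κ → ℝ}
    (hσ : σ ∈ stdSimplex ℝ ι) (hτ : τ ∈ stdSimplex ℝ κ)
    (h : univ.sup' univ_nonempty (fun i => ∑ j, τ j * U i j) ≤
      univ.inf' univ_nonempty (fun j => ∑ i, σ i * U i j)) :
    isNE U σ τ :=
  ⟨hσ, hτ, fun _ hσ' => (pay_le_sup' U hσ' τ).trans (h.trans (inf'_le_pay U σ hτ)),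
    fun _ hτ' => (pay_le_sup' U hσ τ).trans (h.trans (inf'_le_pay U σ hτ'))⟩

theorem isNE.isGreatest_sInf_pay {σ : ι → ℝ} {τ : κ → ℝ} (h : isNE U σ τ) :
    IsGreatest ((fun σ => sInf ((fun τ => pay U σ τ) '' stdSimplex ℝ κ)) '' stdSimplex ℝ ι)
      (pay U σ τ) := by
  obtain ⟨hσ, hτ, hσ_best, hτ_best⟩ := h
  refine ⟨⟨σ, hσ, IsLeast.csInf_eq ⟨⟨τ, hτ, rfl⟩, ?_⟩⟩, ?_⟩
  · rintro _ ⟨τ', hτ', rfl⟩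
    exact hτ_best τ' hτ'
  · rintro _ ⟨σ', hσ', rfl⟩
    have hbdd := ((isCompact_stdSimplex ℝ κ).image (continuous_pay U σ')).bddBelow
    exact (csInf_le hbdd ⟨τ, hτ, rfl⟩).trans (hσ_best σ' hσ')

end

/-- If `σ*` attains the maximin value and `τ*` attains the minimax value, then `(σ*, τ*)`
is a mixed Nash equilibrium, and `U(σ*, τ*)` is the game value `max_σ min_τ U(σ, τ)`. -/
theorem maximin_minimax_optimal_is_NE {ι κ : Type*}
    [Fintype ι] [Fintype κ] [Nonempty ι] [Nonempty κ] (U : ι → κ → ℝ)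
    (σs : ι → ℝ) (τs : κ → ℝ)
    (hσ : σs ∈ stdSimplex ℝ ι) (hτ : τs ∈ stdSimplex ℝ κ)
    (hσmax : ∀ σ ∈ stdSimplex ℝ ι,
      Finset.univ.inf' Finset.univ_nonempty (fun j => ∑ i, σ i * U i j) ≤
      Finset.univ.inf' Finset.univ_nonempty (fun j => ∑ i, σs i * U i j))
    (hτmin : ∀ τ ∈ stdSimplex ℝ κ,
      Finset.univ.sup' Finset.univ_nonempty (fun i => ∑ j, τs j * U i j) ≤
      Finset.univ.sup' Finset.univ_nonempty (fun i => ∑ j, τ j * U i j)) :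
    isNE U σs τs ∧
    IsGreatest ((fun σ => sInf ((fun τ => pay U σ τ) '' stdSimplex ℝ κ)) '' stdSimplex ℝ ι)
      (pay U σs τs) := by
  obtain ⟨τ₀, hτ₀, σ₀, hσ₀, hτ₀σ₀⟩ := exists_minimax_le_maximin U
  have hNE : isNE U σs τs :=
    isNE_of_sup'_le_inf' hσ hτ ((hτmin τ₀ hτ₀).trans (hτ₀σ₀.trans (hσmax σ₀ hσ₀)))
  exact ⟨hNE, hNE.isGreatest_sInf_pay⟩
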